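/- arXiv:1706.00261 — 2 statements merged into one kernel-verified Lean document; each statement's English description precedes it below -/
import Mathlib

section
/- A subset B of a metric space (X,d) is Bourbaki-bounded in X if and only if B is ρ-bounded for every metric ρ on X uniformly equivalent to d (i.e., such that the identity maps between (X,d) and (X,ρ) are uniformly continuous in both directions). -/
/-- m-fold ε-enlargement: `iterBall x ε 0 = ball x ε`, corresponding to B^{m+1}. -/
def iterBall {X : Type*} [PseudoMetricSpace X] (x : X) (ε : ℝ) : ℕ → Set X
  | 0 => Metric.ball x ε
  | (m+1) => ⋃ y ∈ iterBall x ε m, Metric.ball y ε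

/-- ε-chainable component of x. -/
def chainBall {X : Type*} [PseudoMetricSpace X] (x : X) (ε : ℝ) : Set X :=
  ⋃ m, iterBall x ε m

/-- Bourbaki-bounded subset of a metric space. -/
def BourbakiBounded {X : Type*} [PseudoMetricSpace X] (B : Set X) : Prop :=
  ∀ ε > 0, ∃ (m : ℕ) (s : Finset X), B ⊆ ⋃ x ∈ s, iterBall x ε m

/-- α-bounded subset of a metric space. -/
def AlphaBounded {X : Type*} [PseudoMetricSpace X] (B : Set X) : Prop :=
  ∀ ε > 0, ∃ s : Finset X, B ⊆ ⋃ x ∈ s, chainBall x ε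

/-- x and y are ε-chained. -/
def Chained {X : Type*} [PseudoMetricSpace X] (ε : ℝ) (x y : X) : Prop :=
  ∃ (n : ℕ) (u : ℕ → X), u 0 = x ∧ u n = y ∧ ∀ k < n, dist (u k) (u (k+1)) < ε

/-- Bourbaki-Cauchy sequence. -/
def BourbakiCauchy {X : Type*} [PseudoMetricSpace X] (u : ℕ → X) : Prop :=
  ∀ ε > 0, ∃ (m N : ℕ) (x₀ : X), ∀ n ≥ N, u n ∈ iterBall x₀ ε m

/-- Bourbaki-complete metric space. -/
def BourbakiComplete (X : Type*) [PseudoMetricSpace X] : Prop :=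
  ∀ u : ℕ → X, BourbakiCauchy u → ∃ x : X, MapClusterPt x Filter.atTop u

/-- A metric `ρ` on the set `X` (given as a distance function with metric axioms). -/
structure IsMetricOn (X : Type*) (ρ : X → X → ℝ) : Prop where
  self : ∀ x, ρ x x = 0
  eq_of : ∀ x y, ρ x y = 0 → x = y
  symm : ∀ x y, ρ x y = ρ y x
  triangle : ∀ x y z, ρ x z ≤ ρ x y + ρ y z

/-- `ρ` is uniformly equivalent to the metric `d` of `X`: both identity maps are
uniformly continuous. -/
def UnifEquivMetric {X : Type*} [MetricSpace X] (ρ : X → X → ℝ) : Prop :=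
  (∀ ε > 0, ∃ δ > 0, ∀ x y : X, dist x y < δ → ρ x y < ε) ∧
  (∀ ε > 0, ∃ δ > 0, ∀ x y : X, ρ x y < δ → dist x y < ε)


/-!
A Bourbaki-bounded set is ρ-bounded because, by uniform continuity, a `δ`-step in `d` costs
less than `1` in `ρ`, so the `m`-fold `δ`-enlargements of finitely many balls have bounded
`ρ`-diameter.

Conversely, if `B` is not Bourbaki-bounded at scale `ε`, pick points `b n ∈ B` with `b n`
outside the `m n`-fold enlargements around `b 0, …, b (n-1)`. The enlargements
`A M = ⋃ k ≤ M, iterBall (b k) ε (m M)` form a sequence with `thickening ε (A M) ⊆ A (M + 1)`,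
and the depth `ψ x = inf {n ε + d(x, a) | a ∈ A n, d(x, a) < ε}` changes by at most `2 d(x, y)`
between `ε`-close points, so it is uniformly continuous, while `ψ (b (M + 1)) ≥ M ε`.
Then `ρ x y = d(x, y) + |ψ x - ψ y|` is uniformly equivalent to `d` and `B` is `ρ`-unbounded.
-/

open Metric Set

section PseudoMetric

variable {X : Type*} [PseudoMetricSpace X]

theorem iterBall_succ (x : X) (ε : ℝ) (m : ℕ) :
    iterBall x ε (m + 1) = thickening ε (iterBall x ε m) := by
  rw [thickening_eq_biUnion_ball]
  rfl

theorem self_mem_iterBall {x : X} {ε : ℝ} (hε : 0 < ε) {m : ℕ} : x ∈ iterBall x ε m := by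
  induction m with
  | zero => exact mem_ball_self hε
  | succ m ih => exact iterBall_succ x ε m ▸ self_subset_thickening hε _ ih

theorem iterBall_mono {x : X} {ε : ℝ} (hε : 0 < ε) : Monotone (iterBall x ε) :=
  monotone_nat_of_le_succ fun m => (iterBall_succ x ε m).symm ▸ self_subset_thickening hε _

theorem IsMetricOn.le_of_mem_iterBall {ρ : X → X → ℝ} (hρ : IsMetricOn X ρ) {δ : ℝ}
    (hδ : ∀ x y : X, dist x y < δ → ρ x y < 1) {x y : X} {m : ℕ} (hy : y ∈ iterBall x δ m) :
    ρ x y ≤ m + 1 := by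
  induction m generalizing y with
  | zero =>
    have := hδ x y (by rw [dist_comm]; exact hy)
    push_cast
    linarith
  | succ m ih =>
    obtain ⟨z, hz, hyz⟩ := mem_thickening_iff.1 (iterBall_succ x δ m ▸ hy)
    have := hδ z y (by rwa [dist_comm])
    have := hρ.triangle x z y
    have := ih hz
    push_cast
    linarith

theorem BourbakiBounded.exists_forall_le {B : Set X} (hB : BourbakiBounded B)
    {ρ : X → X → ℝ} (hρ : IsMetricOn X ρ)
    (hρd : ∀ ε > 0, ∃ δ > 0, ∀ x y : X, dist x y < δ → ρ x y < ε) :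
    ∃ C : ℝ, ∀ x ∈ B, ∀ y ∈ B, ρ x y ≤ C := by
  obtain ⟨δ, hδ, hδρ⟩ := hρd 1 one_pos
  obtain ⟨m, s, hs⟩ := hB δ hδ
  obtain ⟨D, hD⟩ := ((s ×ˢ s).image fun p => ρ p.1 p.2).bddAbove
  refine ⟨(m + 1) + D + (m + 1), fun x hx y hy => ?_⟩
  obtain ⟨a, ha, hxa⟩ := mem_iUnion₂.1 (hs hx)
  obtain ⟨b, hb, hyb⟩ := mem_iUnion₂.1 (hs hy)
  have hab : ρ a b ≤ D :=
    hD (Finset.mem_image.2 ⟨(a, b), Finset.mk_mem_product ha hb, rfl⟩)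
  have := hρ.le_of_mem_iterBall hδρ hxa
  have := hρ.le_of_mem_iterBall hδρ hyb
  have := hρ.triangle x a y
  have := hρ.triangle a b y
  have := hρ.symm x a
  linarith

def depthBounds (A : ℕ → Set X) (ε : ℝ) (x : X) : Set ℝ :=
  {t | ∃ n : ℕ, ∃ a ∈ A n, dist x a < ε ∧ n * ε + dist x a = t}

noncomputable def layerDepth (A : ℕ → Set X) (ε : ℝ) (x : X) : ℝ :=
  sInf (depthBounds A ε x)

variable {A : ℕ → Set X} {ε : ℝ}

theorem bddBelow_depthBounds (hε : 0 ≤ ε) (x : X) : BddBelow (depthBounds A ε x) :=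
  ⟨0, by rintro _ ⟨n, a, -, -, rfl⟩; positivity⟩

theorem exists_mem_depthBounds_le (hA : ∀ n, thickening ε (A n) ⊆ A (n + 1)) {x y : X}
    (hxy : dist x y < ε) {t : ℝ} (ht : t ∈ depthBounds A ε x) :
    ∃ t' ∈ depthBounds A ε y, t' ≤ t + 2 * dist x y := by
  obtain ⟨n, a, ha, hxa, rfl⟩ := ht
  have hyxa := dist_triangle y x a
  have := dist_nonneg (x := x) (y := y)
  rw [dist_comm y x] at hyxa
  by_cases hya : dist y a < ε
  · exact ⟨_, ⟨n, a, ha, hya, rfl⟩, by linarith⟩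
  · -- otherwise `x` itself, one layer deeper, is a witness for `y`
    have hx : x ∈ A (n + 1) := hA n (mem_thickening_iff.2 ⟨a, ha, hxa⟩)
    refine ⟨_, ⟨n + 1, x, hx, by rwa [dist_comm], rfl⟩, ?_⟩
    rw [dist_comm y x]
    push_cast
    linarith

theorem layerDepth_le_add (hε : 0 ≤ ε) (hA : ∀ n, thickening ε (A n) ⊆ A (n + 1)) {x y : X}
    (hxy : dist x y < ε) : layerDepth A ε y ≤ layerDepth A ε x + 2 * dist x y := by
  unfold layerDepth
  rcases (depthBounds A ε x).eq_empty_or_nonempty with hx | hx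
  · have hy : depthBounds A ε y = ∅ := eq_empty_of_forall_notMem fun t ht => by
      obtain ⟨t', ht', -⟩ := exists_mem_depthBounds_le hA (by rwa [dist_comm]) ht
      exact hx.subset ht'
    rw [hx, hy, Real.sInf_empty]
    positivity
  · rw [← sub_le_iff_le_add]
    refine le_csInf hx fun t ht => ?_
    obtain ⟨t', ht', ht't⟩ := exists_mem_depthBounds_le hA hxy ht
    have := csInf_le (bddBelow_depthBounds hε y) ht'
    linarith

theorem uniformContinuous_layerDepth (hε : 0 < ε) (hA : ∀ n, thickening ε (A n) ⊆ A (n + 1)) :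
    UniformContinuous (layerDepth A ε) := by
  refine Metric.uniformContinuous_iff.2 fun η hη => ⟨min ε (η / 2), by positivity, ?_⟩
  intro x y hxy
  have hε' := hxy.trans_le (min_le_left _ _)
  have hη' := hxy.trans_le (min_le_right _ _)
  have := layerDepth_le_add hε.le hA hε'
  have := layerDepth_le_add hε.le hA (by rwa [dist_comm] at hε')
  rw [Real.dist_eq, abs_sub_lt_iff, dist_comm y x] at *
  constructor <;> linarith

theorem le_layerDepth (hε : 0 < ε) (hA : ∀ n, thickening ε (A n) ⊆ A (n + 1)) {y : X}
    {n M : ℕ} (hy : y ∈ A n) (hyM : y ∉ A M) : M * ε ≤ layerDepth A ε y := by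
  have hA_mono : Monotone A :=
    monotone_nat_of_le_succ fun k => (self_subset_thickening hε _).trans (hA k)
  refine le_csInf ⟨_, n, y, hy, by simpa using hε, rfl⟩ ?_
  rintro _ ⟨k, a, ha, hya, rfl⟩
  have hMk : M ≤ k := by
    by_contra! hkM
    exact hyM (hA_mono hkM (hA k (mem_thickening_iff.2 ⟨a, ha, hya⟩)))
  have : (M : ℝ) * ε ≤ k * ε := by gcongr
  linarith [dist_nonneg (x := y) (y := a)]

theorem exists_seq_notMem_iterBall {B : Set X}
    (h : ∀ (m : ℕ) (s : Finset X), ¬B ⊆ ⋃ x ∈ s, iterBall x ε m) :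
    ∃ (b : ℕ → X) (m : ℕ → ℕ), StrictMono m ∧ (∀ n, b n ∈ B) ∧
      ∀ k n, k < n → b n ∉ iterBall (b k) ε (m n) := by
  classical
  obtain ⟨f, hfB, hf⟩ := exists_seq_of_forall_finset_exists (fun p : ℕ × X => p.2 ∈ B)
    (fun p q => p.1 < q.1 ∧ q.2 ∉ iterBall p.2 ε q.1) fun s _ => by
      obtain ⟨y, hyB, hy⟩ := not_subset.1 (h (s.sup Prod.fst + 1) (s.image Prod.snd))
      refine ⟨(s.sup Prod.fst + 1, y), hyB, fun p hp => ⟨Nat.lt_succ_of_le (s.le_sup hp), ?_⟩⟩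
      exact fun hyp => hy (mem_iUnion₂.2 ⟨p.2, Finset.mem_image_of_mem _ hp, hyp⟩)
  exact ⟨fun n => (f n).2, fun n => (f n).1, fun k n hkn => (hf k n hkn).1, hfB,
    fun k n hkn => (hf k n hkn).2⟩

theorem exists_uniformContinuous_not_bddAbove {B : Set X} (hB : ¬BourbakiBounded B) :
    ∃ f : X → ℝ, UniformContinuous f ∧ ¬BddAbove (f '' B) := by
  simp only [BourbakiBounded, not_forall, not_exists] at hB
  obtain ⟨ε, hε, h⟩ := hB
  obtain ⟨b, m, hm, hbB, hb⟩ := exists_seq_notMem_iterBall h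
  set A : ℕ → Set X := fun M => ⋃ k ≤ M, iterBall (b k) ε (m M)
  have hA : ∀ M, thickening ε (A M) ⊆ A (M + 1) := by
    intro M x hx
    obtain ⟨z, hz, hxz⟩ := mem_thickening_iff.1 hx
    obtain ⟨k, hk, hzk⟩ := mem_iUnion₂.1 hz
    have hx' : x ∈ iterBall (b k) ε (m M + 1) :=
      iterBall_succ (b k) ε (m M) ▸ mem_thickening_iff.2 ⟨z, hzk, hxz⟩
    exact mem_iUnion₂.2 ⟨k, hk.trans M.le_succ, iterBall_mono hε (hm M.lt_succ_self) hx'⟩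
  refine ⟨layerDepth A ε, uniformContinuous_layerDepth hε hA, not_bddAbove_iff.2 fun C => ?_⟩
  obtain ⟨M, hM⟩ := exists_nat_gt (C / ε)
  have hin : b (M + 1) ∈ A (M + 1) := mem_iUnion₂.2 ⟨M + 1, le_rfl, self_mem_iterBall hε⟩
  have hout : b (M + 1) ∉ A M := by
    simp only [A, mem_iUnion₂, not_exists]
    exact fun k hk hmem =>
      hb k (M + 1) (Nat.lt_succ_of_le hk) (iterBall_mono hε (hm.monotone M.le_succ) hmem)
  refine ⟨_, mem_image_of_mem _ (hbB (M + 1)), ?_⟩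
  calc C < M * ε := by rwa [div_lt_iff₀ hε] at hM
    _ ≤ _ := le_layerDepth hε hA hin hout

end PseudoMetric

section Metric

variable {X : Type*} [MetricSpace X]

theorem isMetricOn_dist_add_abs_sub (f : X → ℝ) :
    IsMetricOn X fun x y => dist x y + |f x - f y| where
  self x := by simp
  eq_of x y h :=
    dist_eq_zero.1 (by linarith [dist_nonneg (x := x) (y := y), abs_nonneg (f x - f y)])
  symm x y := by rw [dist_comm, abs_sub_comm]
  triangle x y z := by linarith [dist_triangle x y z, abs_sub_le (f x) (f y) (f z)]

theorem unifEquivMetric_dist_add_abs_sub {f : X → ℝ} (hf : UniformContinuous f) :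
    UnifEquivMetric fun x y : X => dist x y + |f x - f y| := by
  refine ⟨fun η hη => ?_, fun η hη => ⟨η, hη, fun x y h => by linarith [abs_nonneg (f x - f y)]⟩⟩
  obtain ⟨δ, hδ, hfδ⟩ := Metric.uniformContinuous_iff.1 hf (η / 2) (half_pos hη)
  refine ⟨min δ (η / 2), lt_min hδ (half_pos hη), fun x y h => ?_⟩
  have := hfδ (h.trans_le (min_le_left _ _))
  rw [Real.dist_eq] at this
  linarith [min_le_right δ (η / 2)]

end Metric

theorem bourbakiBounded_iff_bounded_for_all_unifEquiv {X : Type*} [MetricSpace X]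
    (B : Set X) :
    BourbakiBounded B ↔
      ∀ ρ : X → X → ℝ, IsMetricOn X ρ → UnifEquivMetric ρ →
        ∃ C : ℝ, ∀ x ∈ B, ∀ y ∈ B, ρ x y ≤ C := by
  refine ⟨fun hB ρ hρ hρd => hB.exists_forall_le hρ hρd.1, fun h => ?_⟩
  by_contra hB
  obtain ⟨f, hf, hfB⟩ := exists_uniformContinuous_not_bddAbove hB
  obtain ⟨C, hC⟩ := h _ (isMetricOn_dist_add_abs_sub f) (unifEquivMetric_dist_add_abs_sub hf)
  obtain ⟨_, ⟨y₀, hy₀, rfl⟩, -⟩ := not_bddAbove_iff.1 hfB 0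
  refine hfB ⟨f y₀ + C, ?_⟩
  rintro _ ⟨y, hy, rfl⟩
  linarith [hC y₀ hy₀ y hy, dist_nonneg (x := y₀) (y := y), neg_abs_le (f y₀ - f y)]
end

section
/- A normed space is Bourbaki-complete (with the norm metric) if and only if it is a finite-dimensional Banach space. -/
/-! In a real normed space the enlargements of a ball are balls again,
`iterBall x ε m = ball x ((m + 1) * ε)`: a point at distance less than `(m + 2) * ε` from `x`
is within `ε` of a point of the segment from `x` that lies at distance less than `(m + 1) * ε`.
Hence Bourbaki-Cauchy sequences are the eventually bounded ones, and Bourbaki-completeness says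
that every bounded sequence has a cluster point, i.e. that the space is proper.
By Riesz's theorem a proper normed space is finite-dimensional; conversely a finite-dimensional
real normed space is proper, hence complete. -/

open Metric Filter Bornology Set

section PseudoMetricSpace

variable {X : Type*} [PseudoMetricSpace X]

theorem iterBall_subset_ball (x : X) (ε : ℝ) (m : ℕ) :
    iterBall x ε m ⊆ ball x ((m + 1) * ε) := by
  induction m with
  | zero => simp [iterBall]
  | succ m ih =>
    simp only [iterBall, iUnion_subset_iff]
    intro z hz y hy
    rw [mem_ball] at hy ⊢
    have hz := mem_ball.mp (ih hz)
    push_cast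
    linarith [dist_triangle y z x]

theorem BourbakiCauchy.exists_eventually_mem_ball {u : ℕ → X} (hu : BourbakiCauchy u) :
    ∃ x₀ R, ∀ᶠ n in atTop, u n ∈ ball x₀ R := by
  obtain ⟨m, N, x₀, hm⟩ := hu 1 one_pos
  exact ⟨x₀, _, eventually_atTop.mpr ⟨N, fun n hn => iterBall_subset_ball x₀ 1 m (hm n hn)⟩⟩

theorem bourbakiComplete_of_properSpace [ProperSpace X] : BourbakiComplete X := by
  intro u hu
  obtain ⟨x₀, R, hR⟩ := hu.exists_eventually_mem_ball
  obtain ⟨x, -, hx⟩ := (isCompact_closedBall x₀ R).exists_mapClusterPt_of_frequently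
    (hR.mono fun _ hn => ball_subset_closedBall hn).frequently
  exact ⟨x, hx⟩

theorem properSpace_of_forall_isBounded_range_exists_mapClusterPt
    (h : ∀ u : ℕ → X, IsBounded (range u) → ∃ x, MapClusterPt x atTop u) : ProperSpace X := by
  refine ⟨fun x₀ r => IsSeqCompact.isCompact fun u hu => ?_⟩
  obtain ⟨x, hx⟩ := h u (isBounded_closedBall.subset (range_subset_iff.mpr hu))
  obtain ⟨ψ, hψ, hux⟩ := hx.tendsto_subseq
  exact ⟨x, isClosed_closedBall.mem_of_tendsto hux (.of_forall fun n => hu (ψ n)), ψ, hψ, hux⟩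

end PseudoMetricSpace

section NormedSpace

variable {X : Type*} [SeminormedAddCommGroup X] [NormedSpace ℝ X]

theorem iterBall_eq_ball (x : X) (ε : ℝ) (m : ℕ) : iterBall x ε m = ball x ((m + 1) * ε) := by
  refine (iterBall_subset_ball x ε m).antisymm ?_
  induction m with
  | zero => simp [iterBall]
  | succ m ih =>
    intro y hy
    rw [mem_ball] at hy
    set z := AffineMap.lineMap x y ((m + 1) / (m + 2) : ℝ)
    have hm : (0 : ℝ) < m + 2 := by positivity
    have hzx : dist z x < (m + 1) * ε := by
      rw [dist_lineMap_left, Real.norm_of_nonneg (by positivity), dist_comm,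
        div_mul_eq_mul_div, div_lt_iff₀ hm]
      push_cast at hy
      nlinarith
    have hzy : dist y z < ε := by
      have hc : (1 : ℝ) - (m + 1) / (m + 2) = 1 / (m + 2) := by field_simp; ring
      rw [dist_comm, dist_lineMap_right, hc, Real.norm_of_nonneg (by positivity), dist_comm,
        one_div_mul_eq_div, div_lt_iff₀ hm]
      push_cast at hy
      linarith
    simp only [iterBall, mem_iUnion]
    exact ⟨z, ih (mem_ball.mpr hzx), mem_ball.mpr hzy⟩

theorem bourbakiCauchy_of_isBounded_range {u : ℕ → X} (hu : IsBounded (range u)) :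
    BourbakiCauchy u := by
  intro ε hε
  obtain ⟨R, hR⟩ := hu.subset_ball 0
  obtain ⟨m, hm⟩ := exists_nat_gt (R / ε)
  refine ⟨m, 0, 0, fun n _ => ?_⟩
  rw [iterBall_eq_ball]
  refine ball_subset_ball ?_ (hR (mem_range_self n))
  rw [div_lt_iff₀ hε] at hm
  nlinarith

theorem bourbakiComplete_iff_properSpace : BourbakiComplete X ↔ ProperSpace X :=
  ⟨fun h => properSpace_of_forall_isBounded_range_exists_mapClusterPt fun u hu =>
    h u (bourbakiCauchy_of_isBounded_range hu), fun _ => bourbakiComplete_of_properSpace⟩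

end NormedSpace

theorem bourbakiComplete_iff_finiteDimensional_banach (X : Type*) [NormedAddCommGroup X]
    [NormedSpace ℝ X] :
    BourbakiComplete X ↔ (FiniteDimensional ℝ X ∧ CompleteSpace X) := by
  rw [bourbakiComplete_iff_properSpace]
  exact ⟨fun _ => ⟨.of_locallyCompactSpace ℝ, inferInstance⟩,
    fun ⟨_, _⟩ => FiniteDimensional.proper ℝ X⟩
end
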